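/- Let X be a compact metric space and f_{0,∞} an equicontinuous sequence of continuous self-maps. Then for every n ≥ 1, the supremum topological sequence entropy of the n-th compositions system equals that of the original system: h*(f_{0,∞}^n) = h*(f_{0,∞}). -/

import Mathlib

open Filter Set MeasureTheory

/-- `nacomp f i n = f (i+n-1) ∘ ⋯ ∘ f i`, the `n`-fold composition of the
nonautonomous system starting at index `i`. -/
def nacomp {X : Type*} (f : ℕ → X → X) (i : ℕ) : ℕ → X → X
  | 0 => id
  | n + 1 => f (i + n) ∘ nacomp f i n

/-- `E` is an `(n, ε, A)`-separated subset of `Λ` for the nonautonomous system `f`. -/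
def IsSepSet {X : Type*} [PseudoMetricSpace X] (f : ℕ → X → X) (A : ℕ → ℕ) (n : ℕ)
    (ε : ℝ) (Λ : Set X) (E : Finset X) : Prop :=
  ↑E ⊆ Λ ∧ ∀ x ∈ E, ∀ y ∈ E, x ≠ y →
    ∃ j : Fin n, ε < dist (nacomp f 0 (A j) x) (nacomp f 0 (A j) y)

/-- `s_n(ε, A, f, Λ)`: maximal cardinality of an `(n,ε,A)`-separated subset of `Λ`. -/
noncomputable def maxSep {X : Type*} [PseudoMetricSpace X] (f : ℕ → X → X) (A : ℕ → ℕ)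
    (n : ℕ) (ε : ℝ) (Λ : Set X) : ℕ :=
  sSup {m | ∃ E : Finset X, IsSepSet f A n ε Λ E ∧ E.card = m}

/-- Topological sequence entropy of `f` on `Λ` along `A`, via separated sets:
`lim_{ε → 0} limsup_n (1/n) log s_n(ε,A,f,Λ)`, the limit realized as a supremum over `ε > 0`. -/
noncomputable def sepEnt {X : Type*} [PseudoMetricSpace X] (f : ℕ → X → X) (A : ℕ → ℕ)
    (Λ : Set X) : EReal :=
  ⨆ ε : {ε : ℝ // 0 < ε},
    limsup (fun n : ℕ => ((Real.log (maxSep f A n ε Λ) / n : ℝ) : EReal)) atTop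

/-- A finite open cover of the whole space. -/
def IsFinOpenCover {X : Type*} [TopologicalSpace X] (𝒜 : Finset (Set X)) : Prop :=
  (∀ u ∈ 𝒜, IsOpen u) ∧ ⋃₀ ↑𝒜 = (univ : Set X)

/-- A cell `⋂_j (f_0^{a_j})⁻¹ (u j)` of the join `⋁_{j} f_0^{-a_j} 𝒜`. -/
def seqCell {X : Type*} (f : ℕ → X → X) (A : ℕ → ℕ) (n : ℕ) (u : Fin n → Set X) : Set X :=
  ⋂ j : Fin n, nacomp f 0 (A j.1) ⁻¹' (u j)

/-- `N((⋁_{j=1}^n f_0^{-a_j} 𝒜)|_Λ)`: the minimal cardinality of a subfamily of the join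
cover whose union contains `Λ`. -/
noncomputable def coverN {X : Type*} (f : ℕ → X → X) (A : ℕ → ℕ) (n : ℕ) (Λ : Set X)
    (𝒜 : Finset (Set X)) : ℕ :=
  sInf {m | ∃ S : Finset (Fin n → Set X), (∀ u ∈ S, ∀ j, u j ∈ 𝒜) ∧
    (Λ ⊆ ⋃ u ∈ S, seqCell f A n u) ∧ S.card = m}

/-- `h_A(f, Λ, 𝒜)`, the sequence entropy of `f` on `Λ` relative to the open cover `𝒜`. -/
noncomputable def coverEntOf {X : Type*} (f : ℕ → X → X) (A : ℕ → ℕ) (Λ : Set X)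
    (𝒜 : Finset (Set X)) : EReal :=
  limsup (fun n : ℕ => ((Real.log (coverN f A n Λ 𝒜) / n : ℝ) : EReal)) atTop

/-- `h_A(f, Λ)`: topological sequence entropy via open covers. -/
noncomputable def coverEnt {X : Type*} [TopologicalSpace X] (f : ℕ → X → X) (A : ℕ → ℕ)
    (Λ : Set X) : EReal :=
  ⨆ 𝒜 : {𝒜 : Finset (Set X) // IsFinOpenCover 𝒜}, coverEntOf f A Λ 𝒜

/-- The supremum topological sequence entropy `h*(f) = sup_A h_A(f)`. -/
noncomputable def supSeqEnt {X : Type*} [PseudoMetricSpace X] (f : ℕ → X → X) : EReal :=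
  ⨆ A : {A : ℕ → ℕ // StrictMono A}, sepEnt f A univ

/-- The `n`-th compositions system `f_{0,∞}^n`, whose `k`-th map is `f_{kn}^n`. -/
def compSys {X : Type*} (f : ℕ → X → X) (n : ℕ) : ℕ → X → X :=
  fun k => nacomp f (k * n) n

/-- A finite measurable partition of the space. -/
def IsFinMeasPartition {X : Type*} [MeasurableSpace X] (P : Finset (Set X)) : Prop :=
  (∀ s ∈ P, MeasurableSet s) ∧ ((P : Set (Set X)).PairwiseDisjoint id) ∧
    ⋃₀ ↑P = (univ : Set X)

/-- `h_{A,μ}(f, P) = limsup (1/n) H_μ(⋁_{j=1}^n f_0^{-a_j} P)`. -/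
noncomputable def measSeqEntPart {X : Type*} [MeasurableSpace X] (μ : Measure X)
    (f : ℕ → X → X) (A : ℕ → ℕ) (P : Finset (Set X)) : EReal :=
  limsup (fun n : ℕ =>
    (((∑ u : Fin n → {s // s ∈ P},
        Real.negMulLog (μ (seqCell f A n (fun j => (u j : Set X)))).toReal) / n : ℝ) : EReal))
    atTop

/-- The measure-theoretic sequence entropy `h_{A,μ}(f)`. -/
noncomputable def measSeqEnt {X : Type*} [MeasurableSpace X] (μ : Measure X)
    (f : ℕ → X → X) (A : ℕ → ℕ) : EReal :=
  ⨆ P : {P : Finset (Set X) // IsFinMeasPartition P}, measSeqEntPart μ f A P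

/-- Covering dimension at most `d`: every finite open cover has a finite open refinement
of order at most `d + 1`. -/
def HasCovDimLE (X : Type*) [TopologicalSpace X] (d : ℕ) : Prop :=
  ∀ 𝒜 : Finset (Set X), IsFinOpenCover 𝒜 → ∃ ℬ : Finset (Set X), IsFinOpenCover ℬ ∧
    (∀ v ∈ ℬ, ∃ u ∈ 𝒜, v ⊆ u) ∧ ∀ x : X, ({v : Set X | v ∈ ℬ ∧ x ∈ v}).ncard ≤ d + 1

/-- The induced nonautonomous system `f̂` on the space of Borel probability measures,
carrying the Lévy–Prokhorov (Prohorov) metric: `f̂ n μ = (f n)_* μ`. -/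
noncomputable def inducedSys {X : Type*} [MeasurableSpace X] (f : ℕ → X → X)
    (hf : ∀ n, Measurable (f n)) :
    ℕ → LevyProkhorov (ProbabilityMeasure X) → LevyProkhorov (ProbabilityMeasure X) :=
  fun n μ => (LevyProkhorov.toMeasureEquiv (α := ProbabilityMeasure X)).symm
    (((LevyProkhorov.toMeasureEquiv (α := ProbabilityMeasure X)) μ).map (hf n).aemeasurable)

/-- Multi-sensitivity of a nonautonomous system. -/
def MultiSensitive {X : Type*} [PseudoMetricSpace X] (f : ℕ → X → X) : Prop :=
  ∃ δ : ℝ, 0 < δ ∧ ∀ (k : ℕ) (V : Fin k → Set X),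
    (∀ i, IsOpen (V i)) → (∀ i, (V i).Nonempty) →
      ∃ n : ℕ, 1 ≤ n ∧ ∀ i, δ < Metric.diam (nacomp f 0 n '' V i)
/-!
Along a sequence `A`, the compositions system is the original system along `n • A`, which gives
`h*(f^n) ≤ h*(f)`. Conversely write `a_j = n q_j + r_j` with `r_j < n`. On a compact space,
compositions of fewer than `n` consecutive maps form a uniformly equicontinuous family, so an
`ε`-separation at time `a_j` for `f` forces a `δ`-separation at time `q_j` for `f^n`. The sequence
`(q_j)` is nondecreasing and unbounded; enumerating its distinct values gives a strictly increasing
`B`, and the first `m` times of `A` are seen among the first `c_m ≤ m` times of `B`, so the growth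
rate along `A` is at most the growth rate along `B`.
-/

section Composition

variable {X : Type*} (f : ℕ → X → X)

theorem nacomp_add (i a b : ℕ) : nacomp f i (a + b) = nacomp f (i + a) b ∘ nacomp f i a := by
  induction b with
  | zero => rfl
  | succ b ih =>
    rw [← Nat.add_assoc, nacomp, ih, ← Nat.add_assoc]
    rfl

theorem nacomp_compSys (n k : ℕ) : nacomp (compSys f n) 0 k = nacomp f 0 (k * n) := by
  induction k with
  | zero => simp [nacomp]
  | succ k ih => simp only [nacomp, compSys, ih, Nat.zero_add, Nat.succ_mul, nacomp_add]

theorem nacomp_eq_comp_nacomp_compSys (n t : ℕ) :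
    nacomp f 0 t = nacomp f (n * (t / n)) (t % n) ∘ nacomp (compSys f n) 0 (t / n) := by
  conv_lhs => rw [← Nat.div_add_mod t n]
  rw [nacomp_add, nacomp_compSys, Nat.zero_add, Nat.mul_comm (t / n) n]

theorem uniformEquicontinuous_nacomp [UniformSpace X] (hf : UniformEquicontinuous f) (r : ℕ) :
    UniformEquicontinuous fun p => nacomp f p r := by
  induction r with
  | zero => exact fun U hU => by filter_upwards [hU] with xy h _ using h
  | succ r ih =>
    intro U hU
    filter_upwards [ih _ (hf.comp (· + r) U hU)] with xy h p using h p p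

theorem uniformEquicontinuous_nacomp_fin [UniformSpace X] (hf : UniformEquicontinuous f)
    (n : ℕ) : UniformEquicontinuous fun i : ℕ × Fin n => nacomp f i.1 i.2 := by
  intro U hU
  filter_upwards [eventually_all.2 fun r : Fin n => uniformEquicontinuous_nacomp f hf r U hU]
    with xy h i using h i.2 i.1

end Composition

section Separated

variable {X : Type*} [PseudoMetricSpace X]

open Metric in
theorem bddAbove_card_isSepSet [CompactSpace X] (f : ℕ → X → X) (A : ℕ → ℕ) (N : ℕ) {ε : ℝ}
    (hε : 0 < ε) (Λ : Set X) :
    BddAbove {m | ∃ E : Finset X, IsSepSet f A N ε Λ E ∧ E.card = m} := by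
  set Φ : X → Fin N → X := fun x j => nacomp f 0 (A j) x
  set r : NNReal := ⟨ε / 2, by positivity⟩
  obtain ⟨C, -, hC, hcover⟩ := exists_finite_isCover_of_isCompact (ε := r)
    (ne_of_gt (half_pos hε)) (isCompact_univ (X := Fin N → X))
  refine ⟨hC.toFinset.card, ?_⟩
  rintro _ ⟨E, hE, rfl⟩
  have hsep : IsSeparated (2 * r : NNReal) (Φ '' E) := by
    rintro _ ⟨x, hx, rfl⟩ _ ⟨y, hy, rfl⟩ hxy
    obtain ⟨j, hj⟩ := hE.2 x hx y hy (ne_of_apply_ne Φ hxy)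
    rw [edist_nndist, ENNReal.coe_lt_coe, ← NNReal.coe_lt_coe, coe_nndist]
    calc ((2 * r : NNReal) : ℝ) = ε := mul_div_cancel₀ ε two_ne_zero
      _ < dist (Φ x) (Φ y) := hj.trans_le (dist_le_pi_dist (Φ x) (Φ y) j)
  have hinj : InjOn Φ E := fun x hx y hy h => by
    by_contra hne
    obtain ⟨j, hj⟩ := hE.2 x hx y hy hne
    simp [Φ, congrFun h j] at hj
    linarith
  have : (E.card : ℕ∞) ≤ hC.toFinset.card :=
    calc (E.card : ℕ∞) = (Φ '' E).encard := by
          rw [hinj.encard_image, encard_coe_eq_coe_finsetCard]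
      _ ≤ packingNumber (2 * r) univ := hsep.encard_le_packingNumber (subset_univ _)
      _ ≤ externalCoveringNumber r univ := packingNumber_two_mul_le_externalCoveringNumber r univ
      _ ≤ C.encard := hcover.externalCoveringNumber_le_encard
      _ = hC.toFinset.card := hC.encard_eq_coe_toFinset_card
  exact_mod_cast this

theorem maxSep_le_maxSep [CompactSpace X] {f g : ℕ → X → X} {A B : ℕ → ℕ} {N N' : ℕ}
    {ε ε' : ℝ} {Λ : Set X} (hε' : 0 < ε')
    (h : ∀ E, IsSepSet f A N ε Λ E → IsSepSet g B N' ε' Λ E) :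
    maxSep f A N ε Λ ≤ maxSep g B N' ε' Λ :=
  csSup_le_csSup (bddAbove_card_isSepSet g B N' hε' Λ) ⟨0, ∅, ⟨by simp, by simp⟩, rfl⟩
    (by rintro _ ⟨E, hE, rfl⟩; exact ⟨E, h E hE, rfl⟩)

theorem IsSepSet.compSys {f : ℕ → X → X} {n : ℕ} (hn : 0 < n) {A B : ℕ → ℕ} {m m' : ℕ}
    {ε δ δ' : ℝ} {Λ : Set X} {E : Finset X}
    (hδ : ∀ x y, dist x y < δ → ∀ i : ℕ × Fin n,
      dist (nacomp f i.1 i.2 x) (nacomp f i.1 i.2 y) < ε)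
    (hδ' : δ' < δ) (hB : ∀ j < m, ∃ k < m', B k = A j / n) (hE : IsSepSet f A m ε Λ E) :
    IsSepSet (compSys f n) B m' δ' Λ E := by
  refine ⟨hE.1, fun x hx y hy hxy => ?_⟩
  obtain ⟨j, hj⟩ := hE.2 x hx y hy hxy
  obtain ⟨k, hk, hBk⟩ := hB j j.2
  refine ⟨⟨k, hk⟩, hδ'.trans_le (not_lt.1 fun hlt => hj.not_gt ?_)⟩
  rw [nacomp_eq_comp_nacomp_compSys f n (A j)]
  exact hδ _ _ (hBk ▸ hlt) (n * (A j / n), ⟨A j % n, Nat.mod_lt _ hn⟩)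

end Separated

theorem Monotone.exists_strictMono_enum_range {q : ℕ → ℕ} (hq : Monotone q)
    (hq_top : Tendsto q atTop atTop) :
    ∃ B c : ℕ → ℕ, StrictMono B ∧ Tendsto c atTop atTop ∧ (∀ m, c m ≤ m) ∧
      ∀ m, ∀ j < m, ∃ k < c m, B k = q j := by
  classical
  set p : ℕ → Prop := (· ∈ range q)
  have hp : (Set.ofPred p).Infinite :=
    infinite_of_not_bddAbove (not_bddAbove_of_tendsto_atTop hq_top)
  set c : ℕ → ℕ := fun m => ((Finset.range m).image q).card
  have hcount : ∀ m, ∀ j < m, Nat.count p (q j) < c m := by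
    intro m j hj
    rw [Nat.count_eq_card_filter_range]
    refine Finset.card_lt_card ⟨fun t ht => ?_, fun h => ?_⟩
    · obtain ⟨ht, i, rfl⟩ := Finset.mem_filter.1 ht
      have hij : i < j := hq.reflect_lt (Finset.mem_range.1 ht)
      exact Finset.mem_image_of_mem q (Finset.mem_range.2 (hij.trans hj))
    · simpa using (Finset.mem_filter.1 (h (Finset.mem_image_of_mem q (Finset.mem_range.2 hj)))).1
  have hcount_top : Tendsto (Nat.count p) atTop atTop :=
    tendsto_atTop_atTop_of_monotone (Nat.count_monotone p) fun K =>
      ⟨Nat.nth p K + 1, by rw [Nat.count_nth_succ_of_infinite hp]; omega⟩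
  refine ⟨Nat.nth p, c, Nat.nth_strictMono hp, ?_, fun m => ?_, fun m j hj => ?_⟩
  · refine (tendsto_add_atTop_iff_nat 1).1 <|
      tendsto_atTop_mono (fun m => ?_) (hcount_top.comp hq_top)
    exact (hcount (m + 1) m m.lt_succ_self).le
  · exact Finset.card_image_le.trans (Finset.card_range m).le
  · exact ⟨_, hcount m j hj, Nat.nth_count ⟨j, rfl⟩⟩

noncomputable def logGrowth (S : ℕ → ℕ) : EReal :=
  limsup (fun m : ℕ => ((Real.log (S m) / m : ℝ) : EReal)) atTop

theorem logGrowth_le_of_le_comp {S T c : ℕ → ℕ} (hc : Tendsto c atTop atTop)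
    (hcm : ∀ m, c m ≤ m) (hST : ∀ m, S m ≤ T (c m)) : logGrowth S ≤ logGrowth T := by
  refine (limsup_le_limsup ?_).trans
    (hc.limsup_comp_le_limsup (u := fun k : ℕ => ((Real.log (T k) / k : ℝ) : EReal)))
  filter_upwards [hc.eventually_ge_atTop 1] with m hm
  have hlog : Real.log (S m) ≤ Real.log (T (c m)) := by
    rcases (S m).eq_zero_or_pos with h0 | hpos
    · simpa [h0] using Real.log_natCast_nonneg (T (c m))
    · exact Real.log_le_log (by exact_mod_cast hpos) (by exact_mod_cast hST m)
  exact EReal.coe_le_coe_iff.2 (div_le_div₀ (Real.log_natCast_nonneg _) hlog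
    (by exact_mod_cast hm) (by exact_mod_cast hcm m))

section Entropy

variable {X : Type*} [PseudoMetricSpace X]

theorem sepEnt_compSys (f : ℕ → X → X) (n : ℕ) (A : ℕ → ℕ) (Λ : Set X) :
    sepEnt (compSys f n) A Λ = sepEnt f (fun j => A j * n) Λ := by
  simp only [sepEnt, maxSep, IsSepSet, nacomp_compSys]

theorem supSeqEnt_compSys_le (f : ℕ → X → X) {n : ℕ} (hn : 0 < n) :
    supSeqEnt (compSys f n) ≤ supSeqEnt f :=
  iSup_le fun ⟨A, hA⟩ => (sepEnt_compSys f n A univ).trans_le <|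
    le_iSup_of_le (ι := {A : ℕ → ℕ // StrictMono A}) ⟨fun j => A j * n, hA.mul_const hn⟩ le_rfl

theorem sepEnt_le_supSeqEnt_compSys [CompactSpace X] {f : ℕ → X → X}
    (hf : UniformEquicontinuous f) {n : ℕ} (hn : 0 < n) {A : ℕ → ℕ} (hA : StrictMono A) :
    sepEnt f A univ ≤ supSeqEnt (compSys f n) := by
  refine iSup_le fun ε => ?_
  obtain ⟨δ, hδ, hδε⟩ :=
    Metric.uniformEquicontinuous_iff.1 (uniformEquicontinuous_nacomp_fin f hf n) ε ε.2
  obtain ⟨B, c, hB, hc, hcm, hBc⟩ := Monotone.exists_strictMono_enum_range (q := (A · / n))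
    (fun i j h => Nat.div_le_div_right (hA.monotone h))
    ((Nat.tendsto_div_const_atTop hn.ne').comp hA.tendsto_atTop)
  calc logGrowth (fun m => maxSep f A m ε univ)
      ≤ logGrowth (fun k => maxSep (compSys f n) B k (δ / 2) univ) :=
        logGrowth_le_of_le_comp hc hcm fun m => maxSep_le_maxSep (half_pos hδ)
          fun E hE => hE.compSys hn hδε (half_lt_self hδ) (hBc m)
    _ ≤ sepEnt (compSys f n) B univ :=
        le_iSup_of_le (ι := {ε : ℝ // 0 < ε}) ⟨δ / 2, half_pos hδ⟩ le_rfl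
    _ ≤ supSeqEnt (compSys f n) :=
        le_iSup_of_le (ι := {A : ℕ → ℕ // StrictMono A}) ⟨B, hB⟩ le_rfl

end Entropy

theorem supSeqEnt_compSys_general {X : Type*} [MetricSpace X] [CompactSpace X]
    (f : ℕ → X → X) (hequi : Equicontinuous f)
    (n : ℕ) (hn : 1 ≤ n) :
    supSeqEnt (compSys f n) = supSeqEnt f :=
  le_antisymm (supSeqEnt_compSys_le f hn) <| iSup_le fun A =>
    sepEnt_le_supSeqEnt_compSys (CompactSpace.uniformEquicontinuous_of_equicontinuous hequi) hn A.2

/-- For an equicontinuous nonautonomous system, the supremum topological sequence entropy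
of the `n`-th compositions system equals that of the original system. -/
theorem supSeqEnt_compSys {X : Type*} [MetricSpace X] [CompactSpace X]
    (f : ℕ → X → X) (hf : ∀ m, Continuous (f m)) (hequi : Equicontinuous f)
    (n : ℕ) (hn : 1 ≤ n) :
    supSeqEnt (compSys f n) = supSeqEnt f :=
  supSeqEnt_compSys_general f hequi n hn
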